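/- arXiv:1507.00141 — 3 statements merged into one kernel-verified Lean document; each statement's English description precedes it below -/
import Mathlib

section
/- Let a > 0, c ≠ 0, σ ≤ μ, σ < −μ, μ ≠ 0, δ ∈ (0, |a/c|), and suppose r D1 − 1 ≤ −μ/σ. Then: (C) e^{μr} + (σ/μ)(e^{μr} − 1) ≥ 0, and consequently the supremum of I2(û, δ) over û ∈ [−δ, (rD1 − 1)δ] equals I2((rD1 − 1)δ, δ); (D) the supremum of I1(û, δ) over û ∈ [(rD1 − 1)δ, −μδ/σ] equals I1(−μδ/σ, δ); (E) I2((rD1 − 1)δ, δ) ≤ I1(−μδ/σ, δ). -/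
/-- The constant `D₁ = (|μ|+|σ|)(1 + (|μ|+|σ|)|c|δ)`. -/
noncomputable def D1 (μ σ c δ : ℝ) : ℝ := (|μ| + |σ|) * (1 + (|μ| + |σ|) * |c| * δ)

/-- The constant `D₂ = (D₁² + (|μ|+|σ|)³|c|δ)(1 + |σc|δ)`. -/
noncomputable def D2 (μ σ c δ : ℝ) : ℝ :=
  ((D1 μ σ c δ) ^ 2 + (|μ| + |σ|) ^ 3 * |c| * δ) * (1 + |σ * c| * δ)

/-- The profile `η̄` used to define `η_{(3)}`. -/
noncomputable def etabar (δ d1 d2 s : ℝ) : ℝ :=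
  if s ≤ 0 then -δ
  else if s < d1 / d2 then -δ + δ * d2 / 2 * s ^ 2
  else -δ - δ * d1 ^ 2 / (2 * d2) + δ * d1 * s

/-- The shift `θ_shift` used to define `η_{(3)}`. -/
noncomputable def thetaShift (δ d1 d2 uh : ℝ) : ℝ :=
  if uh ≤ -δ + δ * d1 ^ 2 / (2 * d2) then Real.sqrt (2 * (uh + δ) / (d2 * δ))
  else (uh + δ + δ * d1 ^ 2 / (2 * d2)) / (d1 * δ)

/-- The extremal forcing functions `η_{(k)}` for `k = 1, 2, 3`. -/
noncomputable def etaK (μ σ c δ uh : ℝ) : ℕ → ℝ → ℝ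
  | 1, θ => if θ < 0 then -δ else uh
  | 2, θ => max (uh + D1 μ σ c δ * δ * θ) (-δ)
  | 3, θ => etabar δ (D1 μ σ c δ) (D2 μ σ c δ)
      (θ + thetaShift δ (D1 μ σ c δ) (D2 μ σ c δ) uh)
  | _, _ => 0

/-- `I(û, δ, ĉ, k) = û e^{μ(a+ĉδ)} + σ ∫_{-(a+ĉδ)}^{0} e^{-μθ} η_{(k)}(θ) dθ`
(the constants `D₁, D₂` in `η_{(k)}` are computed from `|c|`, while `ĉ` only enters
the integration limits). -/
noncomputable def Ifun (μ σ c a δ chat uh : ℝ) (k : ℕ) : ℝ :=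
  uh * Real.exp (μ * (a + chat * δ)) +
    σ * ∫ θ in (-(a + chat * δ))..(0 : ℝ), Real.exp (-μ * θ) * etaK μ σ c δ uh k θ

/-- `P(δ, c, k) = sup_{û ∈ [-δ, -μδ/σ]} I(û, δ, |c|, k)`. -/
noncomputable def Pfun (μ σ c a δ : ℝ) (k : ℕ) : ℝ :=
  sSup ((fun uh => Ifun μ σ c a δ |c| uh k) '' Set.Icc (-δ) (-μ * δ / σ))

/-- `r = a + |c|δ`. -/
noncomputable def rr (a c δ : ℝ) : ℝ := a + |c| * δ

/-- The explicit one-piece integral `I₁(û, δ)` (for `μ ≠ 0`). -/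
noncomputable def I1fun (μ σ c a δ uh : ℝ) : ℝ :=
  uh * (Real.exp (μ * rr a c δ) + σ / μ * (Real.exp (μ * rr a c δ) - 1)) +
    σ / μ * D1 μ σ c δ * δ *
      (1 / μ * (Real.exp (μ * rr a c δ) - 1) - rr a c δ * Real.exp (μ * rr a c δ))

/-- The explicit two-piece integral `I₂(û, δ)` (for `μ ≠ 0`). -/
noncomputable def I2fun (μ σ c a δ uh : ℝ) : ℝ :=
  uh * (Real.exp (μ * rr a c δ) - σ / μ) +
    σ / μ * δ * (D1 μ σ c δ / μ *
      (Real.exp (μ * (δ + uh) / (D1 μ σ c δ * δ)) - 1) - Real.exp (μ * rr a c δ))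


/-!
Everything hinges on the sign of `K = e^{μr} + (σ/μ)(e^{μr} - 1)`, the slope of the affine
function `I₁`. The sign conditions force `σ < 0` and `μ + σ < 0`, and `r D₁ - 1 ≤ -μ/σ`
together with `|μ| + |σ| ≤ D₁` gives `r(|μ| + |σ|) ≤ 1 - μ/σ`; one bound `1 + x ≤ eˣ` then
yields `K ≥ 0` (applied at `x = μr` when `μ < 0` and at `x = μ/σ` when `μ > 0`).

`I₂` is concave in `û` and its derivative at `û* = (rD₁ - 1)δ` equals `K`, so the tangent line
at `û*` shows `I₂(û) ≤ I₂(û*) + K(û - û*) ≤ I₂(û*)` for `û ≤ û*`. Finally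
`I₁(-μδ/σ) - I₂(û*) = δK(1 - μ/σ - rD₁) ≥ 0`.
-/

open Real Set

lemma csSup_image_Icc_eq_of_forall_le {f : ℝ → ℝ} {a b : ℝ} (hab : a ≤ b)
    (h : ∀ x ∈ Icc a b, f x ≤ f b) : sSup (f '' Icc a b) = f b :=
  IsGreatest.csSup_eq ⟨mem_image_of_mem f (right_mem_Icc.2 hab), forall_mem_image.2 h⟩

lemma exp_mul_sub_add_one_le_exp (y z : ℝ) : exp z * (y - z + 1) ≤ exp y := by
  have h := mul_le_mul_of_nonneg_left (add_one_le_exp (y - z)) (exp_pos z).le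
  rwa [← exp_add, add_sub_cancel] at h

section Slope

variable {μ σ r : ℝ}

lemma add_mul_exp_le_of_neg (hμ : μ < 0) (hσ : σ < 0)
    (hr : r * (|μ| + |σ|) - 1 ≤ -μ / σ) : (μ + σ) * exp (μ * r) ≤ σ := by
  rw [abs_of_neg hμ, abs_of_neg hσ, neg_div] at hr
  have hμσ : 0 < μ / σ := div_pos_of_neg_of_neg hμ hσ
  have hr' : 0 ≤ 1 + r * (μ + σ) := by linarith
  calc (μ + σ) * exp (μ * r) ≤ (μ + σ) * (μ * r + 1) :=
        mul_le_mul_of_nonpos_left (add_one_le_exp _) (by linarith)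
    _ = σ + μ * (1 + r * (μ + σ)) := by ring
    _ ≤ σ := by nlinarith

lemma le_add_mul_exp_of_pos (hμ : 0 < μ) (hσ : σ < 0) (hμσ : μ + σ < 0)
    (hr : r * (|μ| + |σ|) - 1 ≤ -μ / σ) : σ ≤ (μ + σ) * exp (μ * r) := by
  rw [abs_of_pos hμ, abs_of_neg hσ] at hr
  have hσ0 : σ ≠ 0 := hσ.ne
  have hσr : 0 ≤ σ * r + 1 := by
    have h := mul_le_mul_of_nonpos_left hr hσ.le
    rw [mul_div_cancel₀ _ hσ0] at h
    nlinarith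
  have hμr : μ * r ≤ -(μ / σ) := by
    have h : μ * r + μ / σ = μ * (σ * r + 1) / σ := by field_simp
    have : μ * (σ * r + 1) / σ ≤ 0 := div_nonpos_of_nonneg_of_nonpos (by positivity) hσ.le
    linarith
  calc σ = σ * 1 := (mul_one σ).symm
    _ ≤ σ * (exp (-(μ / σ)) * (μ / σ + 1)) := by
        refine mul_le_mul_of_nonpos_left ?_ hσ.le
        simpa using exp_mul_sub_add_one_le_exp 0 (-(μ / σ))
    _ = (μ + σ) * exp (-(μ / σ)) := by field_simp
    _ ≤ (μ + σ) * exp (μ * r) := mul_le_mul_of_nonpos_left (exp_le_exp.2 hμr) hμσ.le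

lemma exp_add_div_mul_exp_sub_one_nonneg (hμ : μ ≠ 0) (hσ : σ < 0) (hμσ : μ + σ < 0)
    (hr : r * (|μ| + |σ|) - 1 ≤ -μ / σ) :
    0 ≤ exp (μ * r) + σ / μ * (exp (μ * r) - 1) := by
  have hK : exp (μ * r) + σ / μ * (exp (μ * r) - 1) = ((μ + σ) * exp (μ * r) - σ) / μ := by
    field_simp; ring
  rw [hK]
  rcases hμ.lt_or_gt with hμ | hμ
  · exact div_nonneg_of_nonpos (by linarith [add_mul_exp_le_of_neg hμ hσ hr]) hμ.le
  · exact div_nonneg (by linarith [le_add_mul_exp_of_pos hμ hσ hμσ hr]) hμ.le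

end Slope

section Integrals

variable {μ σ c a δ : ℝ}

lemma abs_add_abs_le_D1 (hδ : 0 ≤ δ) : |μ| + |σ| ≤ D1 μ σ c δ := by
  have h : 0 ≤ (|μ| + |σ|) * |c| * δ := by positivity
  unfold D1
  nlinarith [abs_nonneg μ, abs_nonneg σ]

lemma I1fun_monotone (hK : 0 ≤ exp (μ * rr a c δ) + σ / μ * (exp (μ * rr a c δ) - 1)) :
    Monotone (I1fun μ σ c a δ) := fun x y hxy => by
  have h : I1fun μ σ c a δ y - I1fun μ σ c a δ x =
      (y - x) * (exp (μ * rr a c δ) + σ / μ * (exp (μ * rr a c δ) - 1)) := by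
    unfold I1fun; ring
  nlinarith [mul_nonneg (sub_nonneg.2 hxy) hK]

lemma I2fun_le_I2fun_of_le (hμ : μ ≠ 0) (hσ : σ ≤ 0) (hδ : 0 < δ) (hd : 0 < D1 μ σ c δ)
    (hK : 0 ≤ exp (μ * rr a c δ) + σ / μ * (exp (μ * rr a c δ) - 1)) {x : ℝ}
    (hx : x ≤ (rr a c δ * D1 μ σ c δ - 1) * δ) :
    I2fun μ σ c a δ x ≤ I2fun μ σ c a δ ((rr a c δ * D1 μ σ c δ - 1) * δ) := by
  have hG : μ * (δ + (rr a c δ * D1 μ σ c δ - 1) * δ) / (D1 μ σ c δ * δ) = μ * rr a c δ := by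
    field_simp; ring
  have hgap : μ * (δ + x) / (D1 μ σ c δ * δ) - μ * rr a c δ =
      μ * (x - (rr a c δ * D1 μ σ c δ - 1) * δ) / (D1 μ σ c δ * δ) := by
    field_simp; ring
  have htangent := exp_mul_sub_add_one_le_exp (μ * (δ + x) / (D1 μ σ c δ * δ)) (μ * rr a c δ)
  have hcoef : σ * D1 μ σ c δ * δ / μ ^ 2 ≤ 0 :=
    div_nonpos_of_nonpos_of_nonneg (mul_nonpos_of_nonpos_of_nonneg
      (mul_nonpos_of_nonpos_of_nonneg hσ hd.le) hδ.le) (sq_nonneg μ)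
  have hsplit : I2fun μ σ c a δ x - I2fun μ σ c a δ ((rr a c δ * D1 μ σ c δ - 1) * δ) -
      (x - (rr a c δ * D1 μ σ c δ - 1) * δ) *
        (exp (μ * rr a c δ) + σ / μ * (exp (μ * rr a c δ) - 1)) =
      σ * D1 μ σ c δ * δ / μ ^ 2 * (exp (μ * (δ + x) / (D1 μ σ c δ * δ)) -
        exp (μ * rr a c δ) * (μ * (δ + x) / (D1 μ σ c δ * δ) - μ * rr a c δ + 1)) := by
    rw [hgap]
    simp only [I2fun, hG]
    field_simp
    ring
  nlinarith [mul_nonpos_of_nonpos_of_nonneg hcoef (sub_nonneg.2 htangent),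
    mul_nonneg (sub_nonneg.2 hx) hK]

lemma I2fun_le_I1fun (hμ : μ ≠ 0) (hσ : σ ≠ 0) (hδ : 0 < δ) (hd : 0 < D1 μ σ c δ)
    (hK : 0 ≤ exp (μ * rr a c δ) + σ / μ * (exp (μ * rr a c δ) - 1))
    (hslack : rr a c δ * D1 μ σ c δ ≤ 1 - μ / σ) :
    I2fun μ σ c a δ ((rr a c δ * D1 μ σ c δ - 1) * δ) ≤ I1fun μ σ c a δ (-μ * δ / σ) := by
  have hG : μ * (δ + (rr a c δ * D1 μ σ c δ - 1) * δ) / (D1 μ σ c δ * δ) = μ * rr a c δ := by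
    field_simp; ring
  have hdiff :
      I1fun μ σ c a δ (-μ * δ / σ) - I2fun μ σ c a δ ((rr a c δ * D1 μ σ c δ - 1) * δ) =
        δ * (exp (μ * rr a c δ) + σ / μ * (exp (μ * rr a c δ) - 1)) *
          (1 - μ / σ - rr a c δ * D1 μ σ c δ) := by
    simp only [I1fun, I2fun, hG]
    field_simp
    ring
  nlinarith [mul_nonneg (mul_nonneg hδ.le hK) (sub_nonneg.2 hslack)]

end Integrals

theorem stmt_17_general (μ σ c a δ : ℝ) (ha : 0 < a)
    (h1 : σ ≤ μ) (h2 : σ < -μ) (hμ : μ ≠ 0)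
    (hδ0 : 0 < δ)
    (hyp : rr a c δ * D1 μ σ c δ - 1 ≤ -μ / σ) :
    -- (C)
    (0 ≤ Real.exp (μ * rr a c δ) + σ / μ * (Real.exp (μ * rr a c δ) - 1)) ∧
    sSup ((fun uh => I2fun μ σ c a δ uh) ''
        Set.Icc (-δ) ((rr a c δ * D1 μ σ c δ - 1) * δ)) =
      I2fun μ σ c a δ ((rr a c δ * D1 μ σ c δ - 1) * δ) ∧
    -- (D)
    sSup ((fun uh => I1fun μ σ c a δ uh) ''
        Set.Icc ((rr a c δ * D1 μ σ c δ - 1) * δ) (-μ * δ / σ)) =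
      I1fun μ σ c a δ (-μ * δ / σ) ∧
    -- (E)
    I2fun μ σ c a δ ((rr a c δ * D1 μ σ c δ - 1) * δ) ≤ I1fun μ σ c a δ (-μ * δ / σ) := by
  have hσ : σ < 0 := by rcases hμ.lt_or_gt with h | h <;> linarith
  have hr : 0 < rr a c δ := by unfold rr; positivity
  have hD1 : |μ| + |σ| ≤ D1 μ σ c δ := abs_add_abs_le_D1 hδ0.le
  have hd : 0 < D1 μ σ c δ :=
    (add_pos_of_pos_of_nonneg (abs_pos.2 hμ) (abs_nonneg σ)).trans_le hD1
  have hK := exp_add_div_mul_exp_sub_one_nonneg hμ hσ (by linarith)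
    (by nlinarith : rr a c δ * (|μ| + |σ|) - 1 ≤ -μ / σ)
  have hcrit_ge : -δ ≤ (rr a c δ * D1 μ σ c δ - 1) * δ := by
    nlinarith [mul_pos (mul_pos hr hd) hδ0]
  have hcrit_le : (rr a c δ * D1 μ σ c δ - 1) * δ ≤ -μ * δ / σ := by
    rw [mul_div_right_comm]; exact mul_le_mul_of_nonneg_right hyp hδ0.le
  refine ⟨hK, ?_, ?_, ?_⟩
  · exact csSup_image_Icc_eq_of_forall_le hcrit_ge fun x hx =>
      I2fun_le_I2fun_of_le hμ hσ.le hδ0 hd hK hx.2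
  · exact csSup_image_Icc_eq_of_forall_le hcrit_le fun x hx => I1fun_monotone hK hx.2
  · exact I2fun_le_I1fun hμ hσ.ne hδ0 hd hK (by rw [neg_div] at hyp; linarith)

/-- Lemma B.2 (C),(D),(E) of Humphries–Magpantay: behaviour of `I₁`
and `I₂` when `r D₁ - 1 ≤ -μ/σ`. -/
theorem stmt_17 (μ σ c a δ : ℝ) (ha : 0 < a) (hc : c ≠ 0)
    (h1 : σ ≤ μ) (h2 : σ < -μ) (hμ : μ ≠ 0)
    (hδ0 : 0 < δ) (hδ1 : δ < |a / c|)
    (hyp : rr a c δ * D1 μ σ c δ - 1 ≤ -μ / σ) :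
    -- (C)
    (0 ≤ Real.exp (μ * rr a c δ) + σ / μ * (Real.exp (μ * rr a c δ) - 1)) ∧
    sSup ((fun uh => I2fun μ σ c a δ uh) ''
        Set.Icc (-δ) ((rr a c δ * D1 μ σ c δ - 1) * δ)) =
      I2fun μ σ c a δ ((rr a c δ * D1 μ σ c δ - 1) * δ) ∧
    -- (D)
    sSup ((fun uh => I1fun μ σ c a δ uh) ''
        Set.Icc ((rr a c δ * D1 μ σ c δ - 1) * δ) (-μ * δ / σ)) =
      I1fun μ σ c a δ (-μ * δ / σ) ∧
    -- (E)
    I2fun μ σ c a δ ((rr a c δ * D1 μ σ c δ - 1) * δ) ≤ I1fun μ σ c a δ (-μ * δ / σ) :=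
  stmt_17_general μ σ c a δ ha h1 h2 hμ hδ0 hyp
end

section
/- Let a > 0, c > 0, μ = 0, σ ∈ [−π/(2a), −1/a), and δ ∈ [−1/(cσ), a/c). Let φ : (−∞, 0] → ℝ be any continuous function with φ(0) = δ, φ(t) = −δ for all t ≤ −a − cδ, and φ(t) ∈ (−δ, δ) for all t ∈ (−a − cδ, 0). Then the function u defined by u(t) = φ(t) for t ≤ 0 and u(t) = δ(1 − σ t) for t ≥ 0 is a solution of the model DDE (with μ = 0), it satisfies t − a − c u(t) ≤ −a − cδ for all t ≥ 0, and u(t) → ∞ as t → ∞. Consequently, the zero solution is not globally asymptotically stable and the closed ball of radius δ in the sup norm is not contained in its basin of attraction. -/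
/-- A solution of the model state-dependent DDE
`u'(t) = μ u(t) + σ u(t - a - c u(t))` for `t ≥ 0`, with initial function `φ` on `(-∞,0]`. -/
def IsModelSolution (μ σ c a : ℝ) (φ u : ℝ → ℝ) : Prop :=
  Continuous u ∧ (∀ t ≤ (0 : ℝ), u t = φ t) ∧
    ∀ t, (0 : ℝ) ≤ t →
      HasDerivWithinAt u (μ * u t + σ * u (t - a - c * u t)) (Set.Ici (0 : ℝ)) t

/-- Example 6.1 of Humphries–Magpantay, `μ = 0`: an explicit unbounded
solution, giving an upper bound on the basin of attraction of the zero solution. -/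
theorem stmt_18 (σ c a δ : ℝ) (ha : 0 < a) (hc : 0 < c)
    (hσ1 : -(Real.pi / (2 * a)) ≤ σ) (hσ2 : σ < -(1 / a))
    (hδ1 : -(1 / (c * σ)) ≤ δ) (hδ2 : δ < a / c)
    (φ : ℝ → ℝ) (hφcont : ContinuousOn φ (Set.Iic 0))
    (hφ0 : φ 0 = δ)
    (hφ1 : ∀ t ≤ -a - c * δ, φ t = -δ)
    (hφ2 : ∀ t ∈ Set.Ioo (-a - c * δ) 0, φ t ∈ Set.Ioo (-δ) δ)
    (u : ℝ → ℝ)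
    (hu : ∀ t, u t = if t ≤ 0 then φ t else δ * (1 - σ * t)) :
    IsModelSolution 0 σ c a φ u ∧
    (∀ t ≥ (0 : ℝ), t - a - c * u t ≤ -a - c * δ) ∧
    Filter.Tendsto u Filter.atTop Filter.atTop ∧
    ¬ Filter.Tendsto u Filter.atTop (nhds 0) := by
  have hσneg : σ < 0 := by
    have h0 : (0:ℝ) < 1/a := by positivity
    linarith
  have hcσ : c * σ < 0 := mul_neg_of_pos_of_neg hc hσneg
  have hδpos : 0 < δ := by
    have h0 : 1/(c*σ) < 0 := div_neg_of_pos_of_neg one_pos hcσ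
    linarith
  have hcoef : 1 + c * δ * σ ≤ 0 := by
    have h1 : (-1 : ℝ) / (c * σ) ≤ δ := by rwa [neg_div]
    rw [div_le_iff_of_neg hcσ] at h1
    nlinarith
  -- value of u on [0, ∞)
  have hut : ∀ t : ℝ, 0 ≤ t → u t = δ * (1 - σ * t) := by
    intro t ht
    rcases eq_or_lt_of_le ht with h | h
    · rw [hu, if_pos (le_of_eq h.symm), ← h, hφ0]; ring
    · rw [hu, if_neg (not_le.mpr h)]
  -- the delayed argument bound
  have harg : ∀ t : ℝ, 0 ≤ t → t - a - c * u t ≤ -a - c * δ := by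
    intro t ht
    rw [hut t ht]
    nlinarith [mul_nonpos_of_nonpos_of_nonneg hcoef ht]
  -- continuity
  have hIic : ContinuousOn u (Set.Iic 0) := by
    refine hφcont.congr fun t ht => ?_
    have ht' : t ≤ 0 := ht
    rw [hu, if_pos ht']
  have hg : Continuous fun t : ℝ => δ * (1 - σ * t) := by fun_prop
  have hIci : ContinuousOn u (Set.Ici 0) :=
    hg.continuousOn.congr fun t ht => hut t ht
  have hucont : Continuous u := by
    rw [continuous_iff_continuousAt]
    intro x
    rcases lt_trichotomy x 0 with h | h | h
    · exact hIic.continuousAt (Iic_mem_nhds h)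
    · subst h
      have h1 := (hIic.continuousWithinAt Set.self_mem_Iic).union
        (hIci.continuousWithinAt Set.self_mem_Ici)
      rwa [Set.Iic_union_Ici, continuousWithinAt_univ] at h1
    · exact hIci.continuousAt (Ici_mem_nhds h)
  -- derivative
  have hderiv : ∀ t : ℝ, 0 ≤ t →
      HasDerivWithinAt u (0 * u t + σ * u (t - a - c * u t)) (Set.Ici 0) t := by
    intro t ht
    have hargle : t - a - c * u t ≤ 0 := le_trans (harg t ht) (by nlinarith)
    have huarg : u (t - a - c * u t) = -δ := by
      rw [hu, if_pos hargle, hφ1 _ (harg t ht)]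
    have hgd : HasDerivAt (fun s : ℝ => δ * (1 - σ * s)) (δ * (0 - σ * 1)) t :=
      (((hasDerivAt_const t (1 : ℝ)).sub ((hasDerivAt_id t).const_mul σ))).const_mul δ
    have heq : δ * (0 - σ * 1) = 0 * u t + σ * u (t - a - c * u t) := by
      rw [huarg]; ring
    exact (heq ▸ hgd.hasDerivWithinAt).congr (fun s hs => hut s hs) (hut t ht)
  -- tendsto atTop
  have htop : Filter.Tendsto u Filter.atTop Filter.atTop := by
    have h1 : Filter.Tendsto (fun t : ℝ => δ * (1 - σ * t)) Filter.atTop Filter.atTop := by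
      have h2 : Filter.Tendsto (fun t : ℝ => (-(δ * σ)) * t + δ) Filter.atTop Filter.atTop :=
        Filter.tendsto_atTop_add_const_right _ δ
          (Filter.Tendsto.const_mul_atTop (by nlinarith) Filter.tendsto_id)
      refine h2.congr fun t => by ring
    refine h1.congr' ?_
    filter_upwards [Filter.eventually_ge_atTop (0 : ℝ)] with t ht
    exact (hut t ht).symm
  refine ⟨⟨hucont, fun t ht => by rw [hu, if_pos ht], hderiv⟩, harg, htop,
    not_tendsto_nhds_of_tendsto_atTop htop 0⟩
end

section
/- Let a > 0, c > 0, μ > 0, and σ < −μ, and define q(δ) = −aμ − 1 − cσδ − ln(cδ(μ−σ)) for δ > 0. Then there exists a unique δ* ∈ (0, 1/(c(μ−σ))) with q(δ*) = 0. Moreover, if δ* < a/c, then for any δ ∈ (δ*, a/c) and any continuous φ : (−∞,0] → ℝ with φ(0) = δ, φ(t) = −δ for all t ≤ q(δ)/μ, and φ(t) ∈ (−δ, δ) for t ∈ (q(δ)/μ, 0), the function u defined by u(t) = φ(t) for t ≤ 0 and u(t) = σδ/μ + δ e^{μt}(μ−σ)/μ for t ≥ 0 is a solution of the model DDE, it satisfies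 t − a − c u(t) ≤ q(δ)/μ for all t ≥ 0, and u(t) → ∞ as t → ∞. Consequently δ* is an upper bound on the radius of the largest sup-norm ball contained in the basin of attraction of the zero solution. -/
/-- The function `q(δ) = -aμ - 1 - cσδ - ln(cδ(μ-σ))` of Example 6.2. -/
noncomputable def qfun (μ σ c a δ : ℝ) : ℝ :=
  -a * μ - 1 - c * σ * δ - Real.log (c * δ * (μ - σ))

open Set Filter Topology Real

section RootOfQ

variable {μ σ c : ℝ} (a : ℝ)

lemma qfun_strictAntiOn (hc : 0 < c) (hμ : 0 ≤ μ) (hσ : σ < 0) :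
    StrictAntiOn (qfun μ σ c a) (Ioc 0 (1 / (c * (μ - σ)))) := by
  rintro x ⟨hx, -⟩ y ⟨hy, hyR⟩ hxy
  have hμσ : 0 < μ - σ := by linarith
  have hK : 0 < c * (μ - σ) := mul_pos hc hμσ
  have hσy : -(c * σ * y) ≤ 1 := by
    rw [le_div_iff₀ hK] at hyR
    nlinarith [mul_pos hc hy]
  have hlog : log (c * x * (μ - σ)) - log (c * y * (μ - σ)) = log (x / y) := by
    rw [← log_div (by positivity) (by positivity)]
    congr 1
    field_simp
  have hlog_lt : log (x / y) < x / y - 1 :=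
    log_lt_sub_one_of_pos (by positivity) ((div_lt_one hy).mpr hxy).ne
  have hxy' : x / y - 1 ≤ c * σ * (y - x) := by
    rw [div_sub_one hy.ne', div_le_iff₀ hy]
    nlinarith
  unfold qfun
  linarith

lemma qfun_one_div (hc : c ≠ 0) (hμσ : μ - σ ≠ 0) :
    qfun μ σ c a (1 / (c * (μ - σ))) = -a * μ - μ / (μ - σ) := by
  have h1 : c * (1 / (c * (μ - σ))) * (μ - σ) = 1 := by field_simp
  rw [qfun, h1, log_one]
  field_simp
  ring

lemma qfun_exp_div (hc : c ≠ 0) (hμσ : μ - σ ≠ 0) :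
    qfun μ σ c a (exp (-a * μ - 1) / (c * (μ - σ))) = -σ * exp (-a * μ - 1) / (μ - σ) := by
  have h1 : c * (exp (-a * μ - 1) / (c * (μ - σ))) * (μ - σ) = exp (-a * μ - 1) := by
    field_simp
  rw [qfun, h1, log_exp]
  field_simp
  ring

lemma existsUnique_qfun_eq_zero (ha : 0 ≤ a) (hc : 0 < c) (hμ : 0 < μ) (hσ : σ < 0) :
    ∃! δ, δ ∈ Ioo 0 (1 / (c * (μ - σ))) ∧ qfun μ σ c a δ = 0 := by
  have hμσ : 0 < μ - σ := by linarith
  have hK : 0 < c * (μ - σ) := mul_pos hc hμσ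
  set R := 1 / (c * (μ - σ))
  set δ₀ := exp (-a * μ - 1) / (c * (μ - σ))
  have hδ₀ : 0 < δ₀ := by positivity
  have hδ₀R : δ₀ < R := by
    apply div_lt_div_of_pos_right _ hK
    exact exp_lt_one_iff.mpr (by nlinarith)
  have hqR : qfun μ σ c a R < 0 := by
    rw [qfun_one_div a hc.ne' hμσ.ne']
    nlinarith [div_pos hμ hμσ]
  have hqδ₀ : 0 < qfun μ σ c a δ₀ := by
    rw [qfun_exp_div a hc.ne' hμσ.ne']
    exact div_pos (mul_pos (neg_pos.mpr hσ) (exp_pos _)) hμσ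
  have hcont : ContinuousOn (qfun μ σ c a) (Icc δ₀ R) := by
    unfold qfun
    refine ContinuousOn.sub (by fun_prop) (ContinuousOn.log (by fun_prop) ?_)
    rintro x ⟨hx, -⟩
    have : 0 < x := hδ₀.trans_le hx
    positivity
  obtain ⟨δ, hδ, hqδ⟩ := intermediate_value_Ioo' hδ₀R.le hcont ⟨hqR, hqδ₀⟩
  refine ⟨δ, ⟨⟨hδ₀.trans hδ.1, hδ.2⟩, hqδ⟩, fun δ' ⟨hδ', hqδ'⟩ => ?_⟩
  exact (qfun_strictAntiOn a hc hμ.le hσ).injOn (Ioo_subset_Ioc_self hδ')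
    (Ioo_subset_Ioc_self ⟨hδ₀.trans hδ.1, hδ.2⟩) (hqδ'.trans hqδ.symm)

end RootOfQ

noncomputable def growingBranch (μ σ δ t : ℝ) : ℝ :=
  σ * δ / μ + δ * exp (μ * t) * (μ - σ) / μ

section GrowingBranch

variable {μ σ δ : ℝ}

lemma growingBranch_zero (hμ : μ ≠ 0) : growingBranch μ σ δ 0 = δ := by
  rw [growingBranch, mul_zero, exp_zero]
  field_simp
  ring

lemma hasDerivAt_growingBranch (hμ : μ ≠ 0) (t : ℝ) :
    HasDerivAt (growingBranch μ σ δ) (μ * growingBranch μ σ δ t + σ * -δ) t := by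
  have h := ((((hasDerivAt_id' t).const_mul μ).exp.const_mul δ).mul_const (μ - σ)).div_const μ
    |>.const_add (σ * δ / μ)
  refine h.congr_deriv ?_
  rw [growingBranch]
  field_simp
  ring

lemma tendsto_growingBranch_atTop (hμ : 0 < μ) (hδ : 0 < δ) (hσ : σ < μ) :
    Tendsto (growingBranch μ σ δ) atTop atTop := by
  have hexp : Tendsto (fun t => exp (μ * t)) atTop atTop :=
    tendsto_exp_atTop.comp (tendsto_id.const_mul_atTop hμ)
  have hcoef : 0 < δ * (μ - σ) / μ := div_pos (mul_pos hδ (by linarith)) hμ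
  refine tendsto_atTop_add_const_left _ _ ((hexp.const_mul_atTop hcoef).congr fun t => ?_)
  ring

lemma sub_sub_mul_growingBranch_le_qfun_div (a c : ℝ) (hμ : 0 < μ)
    (hK : 0 < c * δ * (μ - σ)) (t : ℝ) :
    t - a - c * growingBranch μ σ δ t ≤ qfun μ σ c a δ / μ := by
  have h := add_one_le_exp (μ * t + log (c * δ * (μ - σ)))
  rw [exp_add, exp_log hK] at h
  have hexpand : (t - a - c * growingBranch μ σ δ t) * μ
      = μ * t - a * μ - c * σ * δ - c * δ * (μ - σ) * exp (μ * t) := by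
    rw [growingBranch]
    field_simp
    ring
  rw [le_div_iff₀ hμ, hexpand, qfun]
  linarith

end GrowingBranch

lemma isModelSolution_of_eqOn {μ σ c a : ℝ} {φ u w : ℝ → ℝ} (hφ : ContinuousOn φ (Iic 0))
    (huφ : EqOn u φ (Iic 0)) (huw : EqOn u w (Ici 0))
    (hw : ∀ t, 0 ≤ t → HasDerivAt w (μ * w t + σ * u (t - a - c * w t)) t) :
    IsModelSolution μ σ c a φ u := by
  have hwu : ∀ t, 0 ≤ t → HasDerivWithinAt u (μ * u t + σ * u (t - a - c * u t)) (Ici 0) t :=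
    fun t ht => by
      rw [huw ht]
      exact (hw t ht).hasDerivWithinAt.congr (fun s hs => huw hs) (huw ht)
  refine ⟨?_, fun t ht => huφ ht, hwu⟩
  rw [← continuousOn_univ, ← Iic_union_Ici (a := (0 : ℝ))]
  exact (hφ.congr huφ).union_of_isClosed (fun t ht => (hwu t ht).continuousWithinAt)
    isClosed_Iic isClosed_Ici

/-- Example 6.2 of Humphries–Magpantay, `μ > 0`: existence and
uniqueness of the root `δ*` of `q`, and for every `δ ∈ (δ*, a/c)` an explicit unbounded
solution, so `δ*` bounds the radius of the largest ball in the basin of attraction. -/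
theorem stmt_19 (μ σ c a : ℝ) (ha : 0 < a) (hc : 0 < c) (hμ : 0 < μ) (hσ : σ < -μ) :
    (∃! δstar : ℝ, δstar ∈ Set.Ioo 0 (1 / (c * (μ - σ))) ∧ qfun μ σ c a δstar = 0) ∧
    (∀ δstar ∈ Set.Ioo (0 : ℝ) (1 / (c * (μ - σ))), qfun μ σ c a δstar = 0 →
      δstar < a / c →
      ∀ δ ∈ Set.Ioo δstar (a / c),
        ∀ φ : ℝ → ℝ, ContinuousOn φ (Set.Iic 0) →
          φ 0 = δ →
          (∀ t ≤ qfun μ σ c a δ / μ, φ t = -δ) →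
          (∀ t ∈ Set.Ioo (qfun μ σ c a δ / μ) 0, φ t ∈ Set.Ioo (-δ) δ) →
          ∀ u : ℝ → ℝ,
            (∀ t, u t = if t ≤ 0 then φ t
              else σ * δ / μ + δ * Real.exp (μ * t) * (μ - σ) / μ) →
            IsModelSolution μ σ c a φ u ∧
            (∀ t ≥ (0 : ℝ), t - a - c * u t ≤ qfun μ σ c a δ / μ) ∧
            Filter.Tendsto u Filter.atTop Filter.atTop ∧
            ¬ Filter.Tendsto u Filter.atTop (nhds 0)) := by
  refine ⟨existsUnique_qfun_eq_zero a ha.le hc hμ (by linarith), ?_⟩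
  rintro δstar ⟨hδstar, -⟩ - - δ ⟨hδ, -⟩ φ hφ hφ0 hφq - u hu
  have hδpos : 0 < δ := hδstar.trans hδ
  have hμσ : 0 < μ - σ := by linarith
  have huφ : EqOn u φ (Iic 0) := fun t (ht : t ≤ 0) => by rw [hu, if_pos ht]
  have huw : EqOn u (growingBranch μ σ δ) (Ici 0) := by
    rintro t (ht : 0 ≤ t)
    rcases ht.eq_or_lt with rfl | ht
    · rw [huφ self_mem_Iic, hφ0, growingBranch_zero hμ.ne']
    · rw [hu, if_neg ht.not_ge, growingBranch]
  have hdelay (t : ℝ) : t - a - c * growingBranch μ σ δ t ≤ qfun μ σ c a δ / μ :=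
    sub_sub_mul_growingBranch_le_qfun_div a c hμ (by positivity) t
  -- `φ 0 = δ ≠ -δ`, so the region where `φ = -δ` lies in `t < 0`.
  have hq : qfun μ σ c a δ / μ < 0 := by
    by_contra! h
    linarith [hφ0 ▸ hφq 0 h]
  have hu_delayed (t : ℝ) : u (t - a - c * growingBranch μ σ δ t) = -δ := by
    rw [huφ ((hdelay t).trans hq.le), hφq _ (hdelay t)]
  have hutop : Tendsto u atTop atTop :=
    (tendsto_growingBranch_atTop hμ hδpos (by linarith)).congr'
      (eventuallyEq_of_mem (Ici_mem_atTop 0) huw).symm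
  refine ⟨isModelSolution_of_eqOn hφ huφ huw fun t _ => ?_, fun t ht => huw ht ▸ hdelay t,
    hutop, not_tendsto_nhds_of_tendsto_atTop hutop 0⟩
  rw [hu_delayed]
  exact hasDerivAt_growingBranch hμ.ne' t
end
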